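/- If Σ_{i=1}^∞ i β_i < ∞, then E[ζ_n]/√n → 0 as n → ∞, where ζ_n = (Σ_{j=1}^∞ β_j) H_n − Σ_{i=1}^{n−1} Σ_{j=1}^{n−i} β_j ξ_i. -/

import Mathlib

/-!
Summation by parts. With `r k = ∑_{j > k} β j`, the coefficient of `ξ i` in `ζ n` is
`∑_{j ≥ 1} β j - ∑_{j = 1}^{n - i} β j = r (n - i)`, so `ζ n = ∑_{i = 1}^n r (n - i) ξ i`.
Since `0 ≤ ξ i ≤ 1`, this gives `|ζ n| ≤ ∑_{k < n} r k ≤ ∑_k r k = ∑_j j β j`: the variables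
`ζ n` are bounded uniformly in `n` and `ω`, hence so are their expectations.
-/

open MeasureTheory Filter Finset

lemma sum_Icc_one_sub_eq_sum_range {M : Type*} [AddCommMonoid M] (f : ℕ → M) (n : ℕ) :
    ∑ i ∈ Icc 1 n, f (n - i) = ∑ k ∈ range n, f k := by
  rw [← Ico_add_one_right_eq_Icc, sum_Ico_reflect f 1 le_rfl, range_eq_Ico]
  simp

noncomputable def tailSum (β : ℕ → ℝ) (k : ℕ) : ℝ :=
  ∑' j, (Set.Ioi k).indicator β j

section tailSum

variable {β : ℕ → ℝ}

lemma tailSum_nonneg (hβ : ∀ j, 0 ≤ β j) (k : ℕ) : 0 ≤ tailSum β k :=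
  tsum_nonneg fun j => Set.indicator_nonneg (fun j _ => hβ j) j

lemma tsum_succ_sub_sum_Icc_eq_tailSum (hβ : Summable β) (k : ℕ) :
    ∑' j, β (j + 1) - ∑ j ∈ Icc 1 k, β j = tailSum β k := by
  have hcompl : (↑(range (k + 1)) : Set ℕ)ᶜ = Set.Ioi k := by ext; simp
  have hsplit := hβ.sum_add_tsum_compl (s := range (k + 1))
  rw [_root_.tsum_subtype, hcompl, range_eq_Ico, sum_eq_sum_Ico_succ_bot k.add_one_pos, zero_add,
    hβ.tsum_eq_zero_add] at hsplit
  rw [← Ico_add_one_right_eq_Icc, tailSum]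
  linarith

lemma sum_range_indicator_Ioi_le (hβ : ∀ j, 0 ≤ β j) (n j : ℕ) :
    ∑ k ∈ range n, (Set.Ioi k).indicator β j ≤ j * β j := by
  simp only [Set.indicator, Set.mem_Ioi]
  rw [← sum_filter]
  calc ∑ k ∈ range n with k < j, β j ≤ ∑ k ∈ range j, β j :=
        sum_le_sum_of_subset_of_nonneg (fun k hk => by simp at hk ⊢; omega) fun _ _ _ => hβ j
    _ = j * β j := by simp

lemma sum_range_tailSum_le (hβ : ∀ j, 0 ≤ β j) (hsum : Summable β)
    (hmoment : Summable fun j : ℕ => (j : ℝ) * β j) (n : ℕ) :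
    ∑ k ∈ range n, tailSum β k ≤ ∑' j : ℕ, (j : ℝ) * β j := by
  have hind : ∀ k ∈ range n, Summable ((Set.Ioi k).indicator β) := fun k _ => hsum.indicator _
  simp only [tailSum]
  rw [← Summable.tsum_finsetSum hind]
  exact Summable.tsum_le_tsum (sum_range_indicator_Ioi_le hβ n) (summable_sum hind) hmoment

lemma tsum_mul_sum_sub_sum_sum_eq_sum_tailSum_mul (hβ : Summable β) (x : ℕ → ℝ) (n : ℕ) :
    (∑' j, β (j + 1)) * ∑ i ∈ Icc 1 n, x i
        - ∑ i ∈ Icc 1 (n - 1), ∑ j ∈ Icc 1 (n - i), β j * x i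
      = ∑ i ∈ Icc 1 n, tailSum β (n - i) * x i := by
  have hlast : ∑ i ∈ Icc 1 (n - 1), ∑ j ∈ Icc 1 (n - i), β j * x i
      = ∑ i ∈ Icc 1 n, ∑ j ∈ Icc 1 (n - i), β j * x i := by
    -- the extra term `i = n` is a sum over `Icc 1 0 = ∅`
    cases n with
    | zero => rfl
    | succ m => simp [sum_Icc_succ_top]
  rw [hlast, mul_sum, ← sum_sub_distrib]
  exact sum_congr rfl fun i _ => by rw [← tsum_succ_sub_sum_Icc_eq_tailSum hβ, sub_mul, sum_mul]

lemma abs_sum_tailSum_mul_le (hβ : ∀ j, 0 ≤ β j) (hsum : Summable β)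
    (hmoment : Summable fun j : ℕ => (j : ℝ) * β j) {x : ℕ → ℝ} (hx : ∀ i, |x i| ≤ 1) (n : ℕ) :
    |∑ i ∈ Icc 1 n, tailSum β (n - i) * x i| ≤ ∑' j : ℕ, (j : ℝ) * β j :=
  calc |∑ i ∈ Icc 1 n, tailSum β (n - i) * x i|
      ≤ ∑ i ∈ Icc 1 n, tailSum β (n - i) := by
        refine (abs_sum_le_sum_abs _ _).trans (sum_le_sum fun i _ => ?_)
        rw [abs_mul, abs_of_nonneg (tailSum_nonneg hβ _)]
        exact mul_le_of_le_one_right (tailSum_nonneg hβ _) (hx i)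
    _ = ∑ k ∈ range n, tailSum β k := sum_Icc_one_sub_eq_sum_range _ n
    _ ≤ ∑' j : ℕ, (j : ℝ) * β j := sum_range_tailSum_le hβ hsum hmoment n

end tailSum

lemma tendsto_div_sqrt_of_abs_le {a : ℕ → ℝ} {C : ℝ} (h : ∀ n, |a n| ≤ C) :
    Tendsto (fun n => a n / Real.sqrt n) atTop (nhds 0) := by
  simp only [div_eq_inv_mul]
  exact (tendsto_inv_atTop_zero.comp <| Real.tendsto_sqrt_atTop.comp tendsto_natCast_atTop_atTop)
    |>.zero_mul_isBoundedUnder_le (isBoundedUnder_of ⟨C, h⟩)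

theorem stmt13_general
    {Ω : Type*} [MeasurableSpace Ω] (P : Measure Ω) [IsProbabilityMeasure P]
    (β : ℕ → ℝ) (hβpos : ∀ i, 0 < β i)
    (hβsummable : Summable β)
    (hmoment : Summable fun i : ℕ => (i : ℝ) * β i)
    (ξ : ℕ → Ω → ℝ)
    (hξ01 : ∀ n ω, ξ n ω = 0 ∨ ξ n ω = 1)
    (H : ℕ → Ω → ℝ) (hH : ∀ n ω, H n ω = ∑ i ∈ Finset.Icc 1 n, ξ i ω)
    (ζ : ℕ → Ω → ℝ)
    (hζ : ∀ n ω, ζ n ω = (∑' j, β (j + 1)) * H n ω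
      - ∑ i ∈ Finset.Icc 1 (n - 1), ∑ j ∈ Finset.Icc 1 (n - i), β j * ξ i ω) :
    Tendsto (fun n => (∫ ω, ζ n ω ∂P) / Real.sqrt n) atTop (nhds 0) := by
  have hβ : ∀ j, 0 ≤ β j := fun j => (hβpos j).le
  have hξ : ∀ ω i, |ξ i ω| ≤ 1 := fun ω i => by rcases hξ01 i ω with h | h <;> simp [h]
  have hζ_le : ∀ n ω, |ζ n ω| ≤ ∑' j : ℕ, (j : ℝ) * β j := fun n ω => by
    rw [hζ, hH, tsum_mul_sum_sub_sum_sum_eq_sum_tailSum_mul hβsummable]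
    exact abs_sum_tailSum_mul_le hβ hβsummable hmoment (hξ ω) n
  refine tendsto_div_sqrt_of_abs_le (C := ∑' j : ℕ, (j : ℝ) * β j) fun n => ?_
  simpa using norm_integral_le_of_norm_le_const (μ := P) (f := ζ n) (ae_of_all _ (hζ_le n))

theorem stmt13
    {Ω : Type*} [MeasurableSpace Ω] (P : Measure Ω) [IsProbabilityMeasure P]
    (β : ℕ → ℝ) (hβpos : ∀ i, 0 < β i)
    (hβsummable : Summable β)
    (hβsum : ∑' i, β i < 1)
    (hmoment : Summable fun i : ℕ => (i : ℝ) * β i)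
    (ξ : ℕ → Ω → ℝ) (hξmeas : ∀ n, Measurable (ξ n))
    (hξ01 : ∀ n ω, ξ n ω = 0 ∨ ξ n ω = 1)
    (F : ℕ → MeasurableSpace Ω)
    (hF : ∀ n, F n = ⨆ i ∈ Finset.Icc 1 n, MeasurableSpace.comap (ξ i) inferInstance)
    (hξ1 : P {ω | ξ 1 ω = 1} = ENNReal.ofReal (β 0))
    (hcond : ∀ n, 2 ≤ n →
      P[ξ n|F (n - 1)] =ᵐ[P] fun ω => β 0 + ∑ i ∈ Finset.Icc 1 (n - 1), β (n - i) * ξ i ω)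
    (H : ℕ → Ω → ℝ) (hH : ∀ n ω, H n ω = ∑ i ∈ Finset.Icc 1 n, ξ i ω)
    (ζ : ℕ → Ω → ℝ)
    (hζ : ∀ n ω, ζ n ω = (∑' j, β (j + 1)) * H n ω
      - ∑ i ∈ Finset.Icc 1 (n - 1), ∑ j ∈ Finset.Icc 1 (n - i), β j * ξ i ω) :
    Tendsto (fun n => (∫ ω, ζ n ω ∂P) / Real.sqrt n) atTop (nhds 0) :=
  stmt13_general P β hβpos hβsummable hmoment ξ hξ01 H hH ζ hζ
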